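/- Under the local expansions Φ(ζ,z) = γ(ζ)(ζₙ−zₙ) − r(ζ) + O(ρ²) and γ(ζ)(ζₙ−zₙ) + conj(Φ(ζ,z)) = −r(z) + O(ρ²) (where O(ρ²) terms are bounded by Cρ² with ρ ≳ |ζ−z|, and |γ| ≤ Γ bounded, |r(ζ)|, |r(z)| ≤ C), one has the product formula |Φ(ζ,z)|² = γ(ζ)γ(z)|ζₙ−zₙ|² + r(ζ)r(z) + R where |R| ≲ |r(ζ)|ρ² + ρ³ + ρ⁴ (with constants depending on the bounds above; the ρ³ term carries a factor bounded by |ζ| in the paper's coordinates). -/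

import Mathlib

/-!
Write `Φ = a - r(ζ) + E₁` with `a = γ(ζ)(ζₙ - zₙ)` and `E₁ = O(ρ²)`. Taking real parts in the
second expansion gives `2 Re a = r(ζ) - r(z) + Re E₂ - Re E₁` with `E₂ = O(ρ²)`; substituting
this into `|a - r(ζ) + E₁|²` leaves exactly the error
`γ(ζ)(γ(ζ) - γ(z))|ζₙ - zₙ|² - r(ζ)(Re E₁ + Re E₂) + 2 Re(a Ē₁) + |E₁|²`,
whose terms are `O(ρ³)`, `O(|r(ζ)| ρ²)`, `O(ρ³)` and `O(ρ⁴)`.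
-/

open ComplexConjugate

theorem Complex.sq_norm_eq_of_expansions (Φ a : ℂ) (s t : ℝ) :
    ‖Φ‖ ^ 2 = ‖a‖ ^ 2 + s * t - s * (a + conj Φ + t).re - s * (Φ - (a - s)).re
      + 2 * (a * conj (Φ - (a - s))).re + ‖Φ - (a - s)‖ ^ 2 := by
  simp only [Complex.sq_norm, Complex.normSq_apply, Complex.add_re, Complex.sub_re,
    Complex.mul_re, Complex.conj_re, Complex.conj_im, Complex.ofReal_re, Complex.ofReal_im,
    Complex.sub_im]
  ring

theorem exists_nonneg_of_le_mul {α β : Type*} {f g : α → β → ℝ} (hg : ∀ x y, 0 ≤ g x y)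
    (h : ∃ C, ∀ x y, f x y ≤ C * g x y) : ∃ C, 0 ≤ C ∧ ∀ x y, f x y ≤ C * g x y := by
  obtain ⟨C, hC⟩ := h
  exact ⟨max C 0, le_max_right C 0, fun x y =>
    (hC x y).trans (mul_le_mul_of_nonneg_right (le_max_left C 0) (hg x y))⟩

theorem abs_sq_norm_sub_le_of_expansions {Φ Δ : ℂ} {g g' s t ρ Γ Cγ CΔ C₁ C₂ : ℝ}
    (hρ : 0 ≤ ρ) (hCγ : 0 ≤ Cγ) (hCΔ : 0 ≤ CΔ) (hC₁ : 0 ≤ C₁) (hC₂ : 0 ≤ C₂)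
    (hg : |g| ≤ Γ) (hgg' : |g - g'| ≤ Cγ * ρ) (hΔ : ‖Δ‖ ≤ CΔ * ρ)
    (h₁ : ‖Φ - (g * Δ - s)‖ ≤ C₁ * ρ ^ 2) (h₂ : ‖g * Δ + conj Φ + t‖ ≤ C₂ * ρ ^ 2) :
    |‖Φ‖ ^ 2 - (g * g' * ‖Δ‖ ^ 2 + s * t)|
      ≤ (Γ * Cγ * CΔ ^ 2 + 2 * Γ * CΔ * C₁ + C₁ ^ 2 + C₁ + C₂)
        * (|s| * ρ ^ 2 + ρ ^ 3 + ρ ^ 4) := by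
  set a : ℂ := g * Δ
  set E₁ := Φ - (a - s)
  set E₂ := a + conj Φ + t
  have hΓ : 0 ≤ Γ := (abs_nonneg g).trans hg
  have ha : ‖a‖ ≤ Γ * (CΔ * ρ) := by
    simp only [a, norm_mul, Complex.norm_real, Real.norm_eq_abs]
    exact mul_le_mul hg hΔ (norm_nonneg _) hΓ
  have hsplit : ‖a‖ ^ 2 = g * g' * ‖Δ‖ ^ 2 + g * (g - g') * ‖Δ‖ ^ 2 := by
    simp only [a, norm_mul, Complex.norm_real, Real.norm_eq_abs, mul_pow, sq_abs]
    ring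
  have herror : ‖Φ‖ ^ 2 - (g * g' * ‖Δ‖ ^ 2 + s * t) = g * (g - g') * ‖Δ‖ ^ 2
      - s * E₂.re - s * E₁.re + 2 * (a * conj E₁).re + ‖E₁‖ ^ 2 := by
    rw [Complex.sq_norm_eq_of_expansions Φ a s t, hsplit]
    ring
  have hγ_term : |g * (g - g') * ‖Δ‖ ^ 2| ≤ Γ * Cγ * CΔ ^ 2 * ρ ^ 3 := by
    rw [abs_mul, abs_mul, abs_of_nonneg (sq_nonneg ‖Δ‖)]
    calc |g| * |g - g'| * ‖Δ‖ ^ 2 ≤ Γ * (Cγ * ρ) * (CΔ * ρ) ^ 2 := by gcongr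
      _ = Γ * Cγ * CΔ ^ 2 * ρ ^ 3 := by ring
  have hE₂_term : |s * E₂.re| ≤ C₂ * (|s| * ρ ^ 2) := by
    rw [abs_mul, mul_left_comm]
    exact mul_le_mul_of_nonneg_left ((Complex.abs_re_le_norm _).trans h₂) (abs_nonneg s)
  have hE₁_term : |s * E₁.re| ≤ C₁ * (|s| * ρ ^ 2) := by
    rw [abs_mul, mul_left_comm]
    exact mul_le_mul_of_nonneg_left ((Complex.abs_re_le_norm _).trans h₁) (abs_nonneg s)
  have hcross_term : |(a * conj E₁).re| ≤ Γ * CΔ * C₁ * ρ ^ 3 := by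
    calc |(a * conj E₁).re| ≤ ‖a‖ * ‖E₁‖ := by
          simpa only [norm_mul, Complex.norm_conj] using Complex.abs_re_le_norm (a * conj E₁)
      _ ≤ Γ * (CΔ * ρ) * (C₁ * ρ ^ 2) := by gcongr
      _ = Γ * CΔ * C₁ * ρ ^ 3 := by ring
  have hE₁_sq : ‖E₁‖ ^ 2 ≤ C₁ ^ 2 * ρ ^ 4 := by
    calc ‖E₁‖ ^ 2 ≤ (C₁ * ρ ^ 2) ^ 2 := by gcongr
      _ = C₁ ^ 2 * ρ ^ 4 := by ring
  have hbounds : Γ * Cγ * CΔ ^ 2 * ρ ^ 3 + C₂ * (|s| * ρ ^ 2) + C₁ * (|s| * ρ ^ 2)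
      + 2 * (Γ * CΔ * C₁ * ρ ^ 3) + C₁ ^ 2 * ρ ^ 4
      ≤ (Γ * Cγ * CΔ ^ 2 + 2 * Γ * CΔ * C₁ + C₁ ^ 2 + C₁ + C₂)
        * (|s| * ρ ^ 2 + ρ ^ 3 + ρ ^ 4) := by
    have hs : 0 ≤ |s| * ρ ^ 2 := by positivity
    have hρ₃ : 0 ≤ ρ ^ 3 := by positivity
    have hρ₄ : 0 ≤ ρ ^ 4 := by positivity
    have hK₁ : 0 ≤ Γ * Cγ * CΔ ^ 2 := by positivity
    have hK₂ : 0 ≤ Γ * CΔ * C₁ := by positivity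
    nlinarith [mul_nonneg hK₁ hs, mul_nonneg hK₁ hρ₄, mul_nonneg hK₂ hs, mul_nonneg hK₂ hρ₄,
      mul_nonneg (sq_nonneg C₁) hs, mul_nonneg (sq_nonneg C₁) hρ₃, mul_nonneg hC₁ hρ₃,
      mul_nonneg hC₁ hρ₄, mul_nonneg hC₂ hρ₃, mul_nonneg hC₂ hρ₄]
  rw [herror, abs_le]
  constructor <;>
    linarith [abs_le.mp hγ_term, abs_le.mp hE₂_term, abs_le.mp hE₁_term, abs_le.mp hcross_term,
      sq_nonneg ‖E₁‖]

theorem product_formula_for_Phi_general {D : Type*}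
    (cn : D → ℂ) (r γ : D → ℝ) (ρ : D → D → ℝ) (Φ : D → D → ℂ)
    (Γ : ℝ)
    (hρnn : ∀ ζ z, 0 ≤ ρ ζ z)
    (hγbdd : ∀ ζ, |γ ζ| ≤ Γ)
    (hcn : ∃ C : ℝ, ∀ ζ z, ‖cn ζ - cn z‖ ≤ C * ρ ζ z)
    (hγdiff : ∃ C : ℝ, ∀ ζ z, |γ ζ - γ z| ≤ C * ρ ζ z)
    -- local expansion Φ(ζ,z) = γ(ζ)(ζₙ−zₙ) − r(ζ) + O(ρ²):
    (h1 : ∃ C : ℝ, ∀ ζ z,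
      ‖Φ ζ z - ((γ ζ : ℂ) * (cn ζ - cn z) - (r ζ : ℂ))‖ ≤ C * (ρ ζ z) ^ 2)
    -- cancellation γ(ζ)(ζₙ−zₙ) + conj Φ(ζ,z) = −r(z) + O(ρ²):
    (h2 : ∃ C : ℝ, ∀ ζ z,
      ‖(γ ζ : ℂ) * (cn ζ - cn z) + (starRingEnd ℂ) (Φ ζ z) + (r z : ℂ)‖
        ≤ C * (ρ ζ z) ^ 2) :
    ∃ C : ℝ, ∀ ζ z,
      |‖Φ ζ z‖ ^ 2 - (γ ζ * γ z * ‖cn ζ - cn z‖ ^ 2 + r ζ * r z)|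
        ≤ C * (|r ζ| * (ρ ζ z) ^ 2 + (ρ ζ z) ^ 3 + (ρ ζ z) ^ 4) := by
  have hρsq : ∀ ζ z, 0 ≤ ρ ζ z ^ 2 := fun ζ z => sq_nonneg _
  obtain ⟨CΔ, hCΔ, hcn⟩ := exists_nonneg_of_le_mul hρnn hcn
  obtain ⟨Cγ, hCγ, hγdiff⟩ := exists_nonneg_of_le_mul hρnn hγdiff
  obtain ⟨C₁, hC₁, h1⟩ := exists_nonneg_of_le_mul hρsq h1
  obtain ⟨C₂, hC₂, h2⟩ := exists_nonneg_of_le_mul hρsq h2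
  exact ⟨_, fun ζ z => abs_sq_norm_sub_le_of_expansions (hρnn ζ z) hCγ hCΔ hC₁ hC₂
    (hγbdd ζ) (hγdiff ζ z) (hcn ζ z) (h1 ζ z) (h2 ζ z)⟩

/-- the product formula
`|Φ(ζ,z)|² = γ(ζ)γ(z)|ζₙ−zₙ|² + r(ζ)r(z) + R`, `|R| ≲ |r(ζ)|ρ² + ρ³ + ρ⁴`,
from the two local expansions of `Φ` (Lemma 4.3.iii of the paper). -/
theorem product_formula_for_Phi {D : Type*}
    (cn : D → ℂ) (r γ : D → ℝ) (ρ : D → D → ℝ) (Φ : D → D → ℂ)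
    (Γ Cr Cρ : ℝ)
    (hρnn : ∀ ζ z, 0 ≤ ρ ζ z)
    (hγbdd : ∀ ζ, |γ ζ| ≤ Γ) (hrbdd : ∀ ζ, |r ζ| ≤ Cr)
    (hcn : ∃ C : ℝ, ∀ ζ z, ‖cn ζ - cn z‖ ≤ C * ρ ζ z)
    (hγdiff : ∃ C : ℝ, ∀ ζ z, |γ ζ - γ z| ≤ C * ρ ζ z)
    -- local expansion Φ(ζ,z) = γ(ζ)(ζₙ−zₙ) − r(ζ) + O(ρ²):
    (h1 : ∃ C : ℝ, ∀ ζ z,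
      ‖Φ ζ z - ((γ ζ : ℂ) * (cn ζ - cn z) - (r ζ : ℂ))‖ ≤ C * (ρ ζ z) ^ 2)
    -- cancellation γ(ζ)(ζₙ−zₙ) + conj Φ(ζ,z) = −r(z) + O(ρ²):
    (h2 : ∃ C : ℝ, ∀ ζ z,
      ‖(γ ζ : ℂ) * (cn ζ - cn z) + (starRingEnd ℂ) (Φ ζ z) + (r z : ℂ)‖
        ≤ C * (ρ ζ z) ^ 2) :
    ∃ C : ℝ, ∀ ζ z,
      |‖Φ ζ z‖ ^ 2 - (γ ζ * γ z * ‖cn ζ - cn z‖ ^ 2 + r ζ * r z)|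
        ≤ C * (|r ζ| * (ρ ζ z) ^ 2 + (ρ ζ z) ^ 3 + (ρ ζ z) ^ 4) :=
  product_formula_for_Phi_general cn r γ ρ Φ Γ hρnn hγbdd hcn hγdiff h1 h2
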